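/- arXiv:1110.0078 — 2 statements merged into one kernel-verified Lean document; each statement's English description precedes it below -/
import Mathlib

section
/- There is an absolute constant C > 0 such that for every prime p, every integer k ≥ 1, and every real σ with 1/2 < σ ≤ 1: | log(∑_{a=0}^∞ d_k(p^a)² · p^{−2aσ}) − log I₀(2k/p^σ) | ≤ C·k/p^{2σ}. -/
open Finset Real

/-- `d_k(n)`: the number of ordered `k`-tuples of positive integers with product `n`. -/
def dk (k n : ℕ) : ℕ :=
  ((Fintype.piFinset fun _ : Fin k => Finset.Icc 1 n).filter fun f => ∏ i, f i = n).card
/-- The modified Bessel function `I₀(t) = ∑_{n≥0} t^{2n}/(2^{2n}(n!)²)`. -/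
noncomputable def besselI0 (t : ℝ) : ℝ :=
  ∑' n : ℕ, t ^ (2 * n) / (2 ^ (2 * n) * (Nat.factorial n) ^ 2)

/-- The constant `A = ∫₀² log I₀(t)/t² dt`. -/
noncomputable def constA : ℝ := ∫ t in (0 : ℝ)..2, Real.log (besselI0 t) / t ^ 2

/-!
At a prime power `d_k(p^a) = C(a+k-1, k-1)`, so with `x = p^{-2σ} ≤ 1/2` the Euler factor is
`S = ∑ₙ C(n+k-1, k-1)² xⁿ`, while `I₀(2k/p^σ) = J = ∑ₙ (kⁿ/n!)² xⁿ`.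
Termwise `kⁿ/n! ≤ C(n+k-1, k-1)`, so `J ≤ S`. Conversely, Li Shanlan's identity gives
`S = (∑ⱼ C(k-1, j)² xʲ) / (1-x)^(2k-1)`, and `C(k-1, j) ≤ kʲ/j!` bounds the numerator by `J`.
Hence `0 ≤ log S - log J ≤ -(2k-1) log (1-x) ≤ 4kx`.
-/

open scoped Nat

theorem Finset.card_finAntidiagonal (d n : ℕ) :
    (finAntidiagonal d n).card = (d + n - 1).choose n := by
  rw [← Fintype.card_coe, show (d + n - 1).choose n = Fintype.card (Sym (Fin d) n) by
    simp [Sym.card_sym_eq_choose]]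
  exact Fintype.card_congr <|
    (Equiv.subtypeEquivRight (by simp)).trans (Sym.equivNatSumOfFintype (Fin d) n).symm

theorem Nat.Prime.pow_factorization_eq_of_dvd_pow {p a n : ℕ} (hp : p.Prime) (hn : n ∣ p ^ a) :
    p ^ n.factorization p = n := by
  obtain ⟨b, -, rfl⟩ := (Nat.dvd_prime_pow hp).1 hn
  rw [Nat.factorization_pow_self hp]

theorem dk_prime_pow {p : ℕ} (hp : p.Prime) (k a : ℕ) : dk k (p ^ a) = (k + a - 1).choose a := by
  rw [dk, ← card_finAntidiagonal]
  have hdvd {f : Fin k → ℕ} (hf : ∏ i, f i = p ^ a) (i : Fin k) : p ^ (f i).factorization p = f i :=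
    hp.pow_factorization_eq_of_dvd_pow (hf ▸ dvd_prod_of_mem f (mem_univ i))
  refine card_bij' (fun f _ i => (f i).factorization p) (fun e _ i => p ^ e i) ?_ ?_ ?_ ?_
  · intro f hf
    rw [mem_finAntidiagonal, ← (Nat.pow_right_injective hp.two_le).eq_iff, ← prod_pow_eq_pow_sum]
    simp only [hdvd (mem_filter.1 hf).2]
    exact (mem_filter.1 hf).2
  · intro e he
    rw [mem_finAntidiagonal] at he
    simp only [mem_filter, Fintype.mem_piFinset, mem_Icc, prod_pow_eq_pow_sum, he, and_true]
    exact fun i => ⟨Nat.one_le_pow _ _ hp.pos, Nat.pow_le_pow_right hp.pos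
      (he ▸ single_le_sum (fun i _ => Nat.zero_le _) (mem_univ i))⟩
  · exact fun f hf => funext (hdvd (mem_filter.1 hf).2)
  · exact fun e _ => funext fun i => Nat.factorization_pow_self hp

namespace Nat

-- Summed over `j`, the `j²`-weighted terms telescope, leaving `(n+1)² T(n+1) = (n+m+1)² T(n)`
-- for the sum `T` of Li Shanlan's identity below.
theorem li_shanlan_summand_recurrence {m n j : ℕ} (hj : j ≤ m) :
    (n + 1) ^ 2 * (m.choose j ^ 2 * (n + 1 + 2 * m - j).choose (2 * m))
      + (j + 1) ^ 2 * m.choose (j + 1) ^ 2 * (n + 1 + 2 * m - (j + 1)).choose (2 * m)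
    = (n + m + 1) ^ 2 * (m.choose j ^ 2 * (n + 2 * m - j).choose (2 * m))
      + j ^ 2 * m.choose j ^ 2 * (n + 1 + 2 * m - j).choose (2 * m) := by
  rw [show n + 1 + 2 * m - (j + 1) = n + 2 * m - j by omega]
  set a := m.choose j
  set b := m.choose (j + 1)
  set D₀ := (n + 2 * m - j).choose (2 * m)
  set D₁ := (n + 1 + 2 * m - j).choose (2 * m)
  have hab : b * (j + 1) = a * (m - j) := choose_succ_right_eq m j
  rcases le_or_gt j (n + 1) with hjn | hjn
  · have hD : D₀ * (n + 1 + 2 * m - j) = D₁ * (n + 1 - j) := by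
      have := choose_mul_succ_eq (n + 2 * m - j) (2 * m)
      rwa [show n + 2 * m - j + 1 = n + 1 + 2 * m - j by omega,
        show n + 1 + 2 * m - j - 2 * m = n + 1 - j by omega] at this
    zify [hj, hjn, show j ≤ n + 2 * m by omega, show j ≤ n + 1 + 2 * m by omega] at hab hD ⊢
    linear_combination (D₀ : ℤ) * (b * (j + 1) + a * (m - j)) * hab - (a : ℤ) ^ 2 * (n + 1 + j) * hD
  · have hD₁ : D₁ = 0 := choose_eq_zero_of_lt (by omega)
    have hD₀ : D₀ = 0 := choose_eq_zero_of_lt (by omega)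
    simp [hD₀, hD₁]

-- Li Shanlan's identity.
theorem sum_range_choose_sq_mul_choose (m n : ℕ) :
    ∑ j ∈ range (m + 1), m.choose j ^ 2 * (n + 2 * m - j).choose (2 * m) = (n + m).choose m ^ 2 := by
  induction n with
  | zero =>
    rw [sum_eq_single_of_mem 0 (by simp) fun j hjm hj => by
      rw [choose_eq_zero_of_lt (n := 0 + 2 * m - j) (by grind), mul_zero]]
    simp
  | succ n ih =>
    set f : ℕ → ℕ := fun j => j ^ 2 * m.choose j ^ 2 * (n + 1 + 2 * m - j).choose (2 * m)
    have hshift : ∑ j ∈ range (m + 1), f (j + 1) = ∑ j ∈ range (m + 1), f j := by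
      rw [sum_range_succ, sum_range_succ' f]
      simp [f]
    have hstep := sum_congr (s₁ := range (m + 1)) rfl fun j hj =>
      li_shanlan_summand_recurrence (n := n) (le_of_lt_succ (mem_range.1 hj))
    rw [sum_add_distrib, sum_add_distrib, hshift, ← mul_sum, ← mul_sum, ih] at hstep
    have hchoose : (n + m + 1) * (n + m).choose m = (n + 1) * (n + 1 + m).choose m := by
      rw [mul_comm, choose_mul_succ_eq, show n + 1 + m = n + m + 1 by omega,
        show n + m + 1 - m = n + 1 by omega, mul_comm]
    apply Nat.eq_of_mul_eq_mul_left (show 0 < (n + 1) ^ 2 by positivity)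
    rw [← mul_pow, ← hchoose, mul_pow]
    exact add_right_cancel hstep

theorem sum_range_choose_sq_mul_choose_sub (m n : ℕ) :
    ∑ j ∈ range (n + 1), m.choose j ^ 2 * (n - j + 2 * m).choose (2 * m) = (n + m).choose m ^ 2 := by
  set g : ℕ → ℕ := fun j => m.choose j ^ 2 * (n + 2 * m - j).choose (2 * m)
  calc ∑ j ∈ range (n + 1), m.choose j ^ 2 * (n - j + 2 * m).choose (2 * m)
      = ∑ j ∈ range (n + 1), g j :=
        sum_congr rfl fun j hj => by rw [show n - j + 2 * m = n + 2 * m - j by grind]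
    _ = ∑ j ∈ range (n + m + 1), g j :=
        sum_subset (range_subset_range.2 (by omega)) fun j _ hj => by
          simp [g, choose_eq_zero_of_lt (show n + 2 * m - j < 2 * m by grind)]
    _ = ∑ j ∈ range (m + 1), g j :=
        (sum_subset (range_subset_range.2 (by omega)) fun j _ hj => by
          simp [g, choose_eq_zero_of_lt (show m < j by grind)]).symm
    _ = (n + m).choose m ^ 2 := sum_range_choose_sq_mul_choose m n

end Nat

theorem hasSum_choose_sq_mul_pow (m : ℕ) {x : ℝ} (hx : |x| < 1) :
    HasSum (fun n => ((n + m).choose m : ℝ) ^ 2 * x ^ n)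
      ((∑ j ∈ range (m + 1), (m.choose j : ℝ) ^ 2 * x ^ j) / (1 - x) ^ (2 * m + 1)) := by
  have hf : HasSum (fun j => (m.choose j : ℝ) ^ 2 * x ^ j)
      (∑ j ∈ range (m + 1), (m.choose j : ℝ) ^ 2 * x ^ j) :=
    hasSum_sum_of_ne_finset_zero fun j hj => by
      simp [Nat.choose_eq_zero_of_lt (show m < j by simpa using hj)]
  have hg := hasSum_choose_mul_geometric_of_norm_lt_one (2 * m) (r := x) (by rwa [Real.norm_eq_abs])
  have := hasSum_sum_range_mul_of_summable_norm hf.summable.norm hg.summable.norm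
  rw [hf.tsum_eq, hg.tsum_eq, mul_one_div] at this
  refine this.congr_fun fun n => ?_
  rw [← Nat.cast_pow, ← Nat.sum_range_choose_sq_mul_choose_sub m n, Nat.cast_sum, sum_mul]
  refine sum_congr rfl fun j hj => ?_
  rw [show x ^ n = x ^ j * x ^ (n - j) by rw [← pow_add, Nat.add_sub_cancel' (by grind)]]
  push_cast
  ring

theorem hasSum_besselI0_two_mul (a y : ℝ) :
    HasSum (fun n : ℕ => (a ^ n / n !) ^ 2 * (y ^ 2) ^ n) (besselI0 (2 * a * y)) := by
  have hsummable : Summable fun n : ℕ => (a ^ n / n !) ^ 2 * (y ^ 2) ^ n := by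
    refine .of_nonneg_of_le (fun n => by positivity) (fun n => ?_)
      (Real.summable_pow_div_factorial ((a * y) ^ 2))
    rw [show (a ^ n / n !) ^ 2 * (y ^ 2) ^ n = ((a * y) ^ 2) ^ n / (n ! : ℝ) ^ 2 by ring]
    exact div_le_div_of_nonneg_left (by positivity) (by positivity)
      (le_self_pow₀ (mod_cast n.factorial_pos) two_ne_zero)
  convert hsummable.hasSum
  refine tsum_congr fun n => ?_
  rw [pow_mul, pow_mul]
  field_simp
  ring

theorem besselI0_two_mul_le_tsum_choose_sq_mul_pow (m : ℕ) {y : ℝ} (hy : y ^ 2 < 1) :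
    besselI0 (2 * (m + 1) * y) ≤ ∑' n : ℕ, ((n + m).choose m : ℝ) ^ 2 * (y ^ 2) ^ n := by
  refine hasSum_le (fun n => ?_) (hasSum_besselI0_two_mul _ _)
    (hasSum_choose_sq_mul_pow m (by rwa [abs_of_nonneg (sq_nonneg y)])).summable.hasSum
  have hcoeff : ((m + 1 : ℝ) ^ n / n !) ≤ (n + m).choose m := by
    have := Nat.pow_le_choose (α := ℝ) n (n + m)
    rwa [show n + m + 1 - n = m + 1 by omega, Nat.choose_symm_add, Nat.cast_add_one] at this
  exact mul_le_mul_of_nonneg_right (pow_le_pow_left₀ (by positivity) hcoeff 2) (by positivity)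

theorem sum_range_choose_sq_mul_pow_le_besselI0_two_mul (m : ℕ) (y : ℝ) :
    ∑ j ∈ range (m + 1), (m.choose j : ℝ) ^ 2 * (y ^ 2) ^ j ≤ besselI0 (2 * (m + 1) * y) := by
  have hJ := hasSum_besselI0_two_mul (m + 1) y
  rw [← hJ.tsum_eq]
  refine (sum_le_sum fun j _ => ?_).trans (hJ.summable.sum_le_tsum _ fun n _ => by positivity)
  have hcoeff : (m.choose j : ℝ) ≤ (m + 1 : ℝ) ^ j / j ! :=
    (Nat.choose_le_pow_div j m).trans (by gcongr; linarith)
  exact mul_le_mul_of_nonneg_right (pow_le_pow_left₀ (by positivity) hcoeff 2) (by positivity)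

theorem neg_log_one_sub_le_two_mul {x : ℝ} (hx₀ : 0 ≤ x) (hx : x ≤ 1 / 2) : -log (1 - x) ≤ 2 * x := by
  have h := one_sub_inv_le_log_of_pos (show 0 < 1 - x by linarith)
  have : (1 - x)⁻¹ ≤ 1 + 2 * x := by
    rw [inv_le_iff_one_le_mul₀ (by linarith)]
    nlinarith
  linarith

theorem abs_log_tsum_choose_sq_mul_pow_sub_log_besselI0_le (m : ℕ) {y : ℝ} (hy : y ^ 2 ≤ 1 / 2) :
    |log (∑' n : ℕ, ((n + m).choose m : ℝ) ^ 2 * (y ^ 2) ^ n) - log (besselI0 (2 * (m + 1) * y))|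
      ≤ 4 * (m + 1) * y ^ 2 := by
  have hx₀ : 0 ≤ y ^ 2 := sq_nonneg y
  have hJS := besselI0_two_mul_le_tsum_choose_sq_mul_pow m (by linarith)
  have hSJ : ∑' n : ℕ, ((n + m).choose m : ℝ) ^ 2 * (y ^ 2) ^ n
      ≤ besselI0 (2 * (m + 1) * y) / (1 - y ^ 2) ^ (2 * m + 1) := by
    rw [(hasSum_choose_sq_mul_pow m (by rw [abs_of_nonneg hx₀]; linarith)).tsum_eq]
    gcongr
    · exact pow_nonneg (by linarith) _
    · exact sum_range_choose_sq_mul_pow_le_besselI0_two_mul m y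
  have hJ₁ : 1 ≤ besselI0 (2 * (m + 1) * y) := by
    simpa using le_hasSum (hasSum_besselI0_two_mul (m + 1) y) 0 fun n _ => by positivity
  set x := y ^ 2
  set S := ∑' n : ℕ, ((n + m).choose m : ℝ) ^ 2 * x ^ n
  set J := besselI0 (2 * (m + 1) * y)
  have hlog : log S - log J ≤ (2 * m + 1) * -log (1 - x) := by
    have := log_le_log (by linarith) hSJ
    rw [log_div (by linarith) (pow_pos (by linarith) _).ne', log_pow] at this
    push_cast at this
    linarith
  rw [abs_of_nonneg (sub_nonneg.2 (log_le_log (by linarith) hJS))]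
  calc log S - log J ≤ (2 * m + 1) * -log (1 - x) := hlog
    _ ≤ (2 * m + 1) * (2 * x) := by gcongr; exact neg_log_one_sub_le_two_mul hx₀ hy
    _ ≤ 4 * (m + 1) * x := by nlinarith

theorem Nat.Prime.two_le_rpow {p : ℕ} (hp : p.Prime) {s : ℝ} (hs : 1 ≤ s) : 2 ≤ (p : ℝ) ^ s :=
  calc (2 : ℝ) ≤ (p : ℝ) ^ (1 : ℝ) := by rw [rpow_one]; exact_mod_cast hp.two_le
    _ ≤ (p : ℝ) ^ s := rpow_le_rpow_of_exponent_le (by exact_mod_cast hp.one_le) hs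

theorem divisor_sum_bessel :
    ∃ C : ℝ, 0 < C ∧ ∀ p : ℕ, p.Prime → ∀ k : ℕ, 1 ≤ k → ∀ σ : ℝ, 1 / 2 < σ → σ ≤ 1 →
      |Real.log (∑' a : ℕ, (dk k (p ^ a) : ℝ) ^ 2 / (p : ℝ) ^ (2 * (a : ℝ) * σ)) -
          Real.log (besselI0 (2 * k / (p : ℝ) ^ σ))| ≤ C * k / (p : ℝ) ^ (2 * σ) := by
  refine ⟨4, by norm_num, fun p hp k _ σ hσ _ => ?_⟩
  obtain ⟨m, rfl⟩ : ∃ m, k = m + 1 := ⟨k - 1, by omega⟩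
  have hp₀ : (0 : ℝ) < p := by exact_mod_cast hp.pos
  have hrpow (s : ℝ) (a : ℕ) : ((p : ℝ) ^ s) ^ a = (p : ℝ) ^ (s * a) := by
    rw [← rpow_natCast, ← rpow_mul hp₀.le]
  set y := ((p : ℝ) ^ σ)⁻¹
  have hy₂ : y ^ 2 = ((p : ℝ) ^ (2 * σ))⁻¹ := by
    rw [inv_pow, hrpow]; ring_nf
  have hy : y ^ 2 ≤ 1 / 2 := by
    rw [hy₂, one_div]
    exact inv_anti₀ two_pos (hp.two_le_rpow (by linarith))
  have hterm (a : ℕ) : (dk (m + 1) (p ^ a) : ℝ) ^ 2 / (p : ℝ) ^ (2 * (a : ℝ) * σ)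
      = ((a + m).choose m : ℝ) ^ 2 * (y ^ 2) ^ a := by
    rw [dk_prime_pow hp, show m + 1 + a - 1 = a + m by omega, Nat.choose_symm_add, hy₂, inv_pow,
      hrpow, div_eq_mul_inv, mul_comm (2 * σ)]
    ring_nf
  have harg : 2 * ((m + 1 : ℕ) : ℝ) / (p : ℝ) ^ σ = 2 * (m + 1) * y := by push_cast; ring
  rw [tsum_congr hterm, harg]
  calc _ ≤ 4 * (m + 1) * y ^ 2 := abs_log_tsum_choose_sq_mul_pow_sub_log_besselI0_le m hy
    _ = _ := by rw [hy₂]; push_cast; ring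
end

section
/- For every integer q ≥ 2 and every primitive nonprincipal Dirichlet character χ modulo q: max_{1 ≤ t ≤ q} | ∑_{n ≤ t} χ(n) | ≥ √q/(2π), the maximum taken over integers t. -/
/-!
Extend `S_χ` to `ℤ/q` by `S(a) = S_χ(a.val)`, with representatives `0 ≤ a.val < q`. As `χ` is
nonprincipal, `S_χ(q - 1) = 0`, so `χ(a) = S(a) - S(a - 1)` for every `a ∈ ℤ/q`, including `a = 0`.
Summation by parts around the cycle `ℤ/q` then gives `τ(χ) = ∑ₐ S(a) (e(a/q) - e((a+1)/q))`, and
each difference has modulus `|e(1/q) - 1| ≤ 2π/q`, so `|τ(χ)| ≤ 2π M(χ)`. For primitive `χ` the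
discrete Fourier transform of `χ` is `τ(χ) χ̄(-·)`; transforming twice yields `τ(χ) conj τ(χ) = q`.
-/

open Finset Real

/-- `S_χ(t) = ∑_{n ≤ t} χ(n)` for integer `t`. -/
noncomputable def charSum {q : ℕ} (χ : DirichletCharacter ℂ q) (t : ℕ) : ℂ :=
  ∑ n ∈ Finset.Icc 1 t, χ n

/-- `M(χ) = max_{1 ≤ t ≤ q} |S_χ(t)|`. -/
noncomputable def Mmax {q : ℕ} (χ : DirichletCharacter ℂ q) : ℝ :=
  (((Finset.Icc 1 q).sup fun t => ‖charSum χ t‖₊ : NNReal) : ℝ)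

namespace DirichletCharacter

variable {N : ℕ} [NeZero N] {χ : DirichletCharacter ℂ N}

lemma IsPrimitive.gaussSum_mul_star (hχ : χ.IsPrimitive) :
    gaussSum χ ZMod.stdAddChar * star (gaussSum χ ZMod.stdAddChar) = N := by
  have h := congr_fun (ZMod.dft_dft (χ : ZMod N → ℂ)) (-1)
  simp only [neg_neg, map_one, smul_eq_mul, mul_one] at h
  rw [← h, star_gaussSum_eq, AddChar.inv_mulShift, ← fourierTransform_eq_gaussSum_mulShift]
  have : ZMod.dft (χ : ZMod N → ℂ) = fun k ↦ gaussSum χ ZMod.stdAddChar * χ⁻¹ (-k) := by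
    ext k; rw [hχ.fourierTransform_eq_inv_mul_gaussSum, mul_comm]
  rw [this, ZMod.dft_const_mul, ZMod.dft_comp_neg]
  simp

lemma IsPrimitive.norm_gaussSum (hχ : χ.IsPrimitive) :
    ‖gaussSum χ ZMod.stdAddChar‖ = √N := by
  have h := hχ.gaussSum_mul_star
  rw [← starRingEnd_apply, Complex.mul_conj'] at h
  have h' : ‖gaussSum χ ZMod.stdAddChar‖ ^ 2 = N := by exact_mod_cast h
  rw [← h', Real.sqrt_sq (norm_nonneg _)]

end DirichletCharacter

lemma Fintype.sum_sub_shift_mul {G R : Type*} [AddCommGroup G] [Fintype G]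
    [NonUnitalNonAssocRing R] (S e : G → R) (g : G) :
    ∑ x, (S x - S (x - g)) * e x = ∑ x, S x * (e x - e (x + g)) := by
  have : ∑ x, S (x - g) * e x = ∑ x, S x * e (x + g) :=
    Fintype.sum_equiv (Equiv.subRight g) _ _ fun x ↦ by simp
  simp only [sub_mul, mul_sub, Finset.sum_sub_distrib, this]

lemma ZMod.sum_eq_sum_range {M : Type*} [AddCommMonoid M] {N : ℕ} [NeZero N]
    (f : ZMod N → M) : ∑ a, f a = ∑ n ∈ range N, f n :=
  Finset.sum_nbij' ZMod.val Nat.cast (fun a _ ↦ mem_range.2 a.val_lt) (fun _ _ ↦ mem_univ _)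
    (fun a _ ↦ ZMod.natCast_zmod_val a) (fun n hn ↦ ZMod.val_natCast_of_lt (mem_range.1 hn))
    (fun a _ ↦ by rw [ZMod.natCast_zmod_val])

lemma ZMod.norm_stdAddChar_sub_stdAddChar_add_one_le {N : ℕ} [NeZero N] (x : ZMod N) :
    ‖stdAddChar x - stdAddChar (x + 1)‖ ≤ 2 * π / N := by
  have h1 : stdAddChar (1 : ZMod N) = Complex.exp (Complex.I * (2 * π / N : ℝ)) := by
    rw [← Int.cast_one, ZMod.stdAddChar_coe]
    push_cast
    ring_nf
  rw [AddChar.map_add_eq_mul, ← mul_one_sub, norm_mul, ZMod.stdAddChar_apply, Circle.norm_coe,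
    one_mul, norm_sub_rev, h1]
  refine Real.norm_exp_I_mul_ofReal_sub_one_le.trans_eq ?_
  rw [Real.norm_of_nonneg (by positivity)]

section charSum

variable {q : ℕ} (χ : DirichletCharacter ℂ q)

@[simp]
lemma charSum_zero : charSum χ 0 = 0 := by
  simp [charSum]

lemma charSum_add_one (t : ℕ) : charSum χ (t + 1) = charSum χ t + χ (t + 1) := by
  rw [charSum, charSum, Finset.sum_Icc_succ_top (by omega), Nat.cast_add_one]

lemma sum_range_add_one_eq_apply_zero_add_charSum (t : ℕ) :
    ∑ n ∈ range (t + 1), χ n = χ 0 + charSum χ t := by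
  induction t with
  | zero => simp
  | succ t ih => rw [sum_range_succ, ih, charSum_add_one, add_assoc, Nat.cast_add_one]

lemma charSum_sub_one_eq_zero [Fact (1 < q)] (hχ : χ ≠ 1) : charSum χ (q - 1) = 0 := by
  have h := sum_range_add_one_eq_apply_zero_add_charSum χ (q - 1)
  rwa [Nat.sub_add_cancel NeZero.one_le, ← ZMod.sum_eq_sum_range (χ ·),
    MulChar.sum_eq_zero_of_ne_one hχ, MulChar.map_zero, zero_add, eq_comm] at h

lemma Mmax_nonneg : 0 ≤ Mmax χ :=
  NNReal.coe_nonneg _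

lemma norm_charSum_le_Mmax {t : ℕ} (ht : t ≤ q) : ‖charSum χ t‖ ≤ Mmax χ := by
  rcases t.eq_zero_or_pos with rfl | ht₀
  · rw [charSum_zero, norm_zero]
    exact Mmax_nonneg χ
  · exact_mod_cast Finset.le_sup (f := fun t ↦ ‖charSum χ t‖₊) (mem_Icc.2 ⟨ht₀, ht⟩)

lemma apply_eq_charSum_val_sub_charSum_val_sub_one [Fact (1 < q)] (hχ : χ ≠ 1) (a : ZMod q) :
    χ a = charSum χ a.val - charSum χ (a - 1).val := by
  obtain ⟨n, hn, rfl⟩ : ∃ n < q, (n : ZMod q) = a := ⟨a.val, a.val_lt, a.natCast_zmod_val⟩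
  cases n with
  | zero =>
    obtain ⟨p, rfl⟩ : ∃ p, q = p + 1 := ⟨q - 1, by omega⟩
    have h := charSum_sub_one_eq_zero χ hχ
    rw [Nat.add_sub_cancel] at h
    rw [Nat.cast_zero, zero_sub, ZMod.val_zero, ZMod.val_neg_one, charSum_zero, h, sub_zero,
      MulChar.map_zero]
  | succ m =>
    rw [ZMod.val_natCast_of_lt hn, Nat.cast_add_one, add_sub_cancel_right,
      ZMod.val_natCast_of_lt (by omega), charSum_add_one, add_sub_cancel_left]

end charSum

lemma norm_gaussSum_le_two_pi_mul_Mmax {q : ℕ} [Fact (1 < q)] {χ : DirichletCharacter ℂ q}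
    (hχ : χ ≠ 1) : ‖gaussSum χ ZMod.stdAddChar‖ ≤ 2 * π * Mmax χ := by
  set S : ZMod q → ℂ := fun a ↦ charSum χ a.val
  have hτ : gaussSum χ ZMod.stdAddChar =
      ∑ a, S a * (ZMod.stdAddChar a - ZMod.stdAddChar (a + 1)) := by
    rw [gaussSum, ← Fintype.sum_sub_shift_mul]
    simp only [S, ← apply_eq_charSum_val_sub_charSum_val_sub_one χ hχ]
  have hterm (a : ZMod q) :
      ‖S a * (ZMod.stdAddChar a - ZMod.stdAddChar (a + 1))‖ ≤ Mmax χ * (2 * π / q) := by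
    rw [norm_mul]
    exact mul_le_mul (norm_charSum_le_Mmax χ a.val_lt.le)
      (ZMod.norm_stdAddChar_sub_stdAddChar_add_one_le a) (norm_nonneg _) (Mmax_nonneg χ)
  calc ‖gaussSum χ ZMod.stdAddChar‖
      ≤ ∑ _a : ZMod q, Mmax χ * (2 * π / q) := hτ ▸ norm_sum_le_of_le _ fun a _ ↦ hterm a
    _ = 2 * π * Mmax χ := by
      rw [sum_const, card_univ, ZMod.card, nsmul_eq_mul]
      field_simp [NeZero.ne q]

theorem Mmax_lower_bound_primitive :
    ∀ q : ℕ, 2 ≤ q → ∀ χ : DirichletCharacter ℂ q, χ.IsPrimitive → χ ≠ 1 →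
      Real.sqrt q / (2 * Real.pi) ≤ Mmax χ := by
  intro q hq χ hprim hne
  have : Fact (1 < q) := ⟨hq⟩
  rw [div_le_iff₀' (by positivity), ← hprim.norm_gaussSum]
  exact norm_gaussSum_le_two_pi_mul_Mmax hne
end
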